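/- arXiv:1003.2033 — 6 statements merged into one kernel-verified Lean document; each statement's English description precedes it below -/
import Mathlib

section
/- Let z be a complex number and let a_1, ..., a_N and b_1, ..., b_M be complex numbers such that all of z, a_1,...,a_N, b_1,...,b_M are pairwise distinct. For a nonempty list L = (c_N, ..., c_1) of such points define ζ_L(z) = (∏_{k=2}^{N} 1/(c_k - c_{k-1})) · 1/(c_1 - z), and ζ_∅(z) = 1. Then ζ_{(a_N,...,a_1)}(z) · ζ_{(b_M,...,b_1)}(z) = ∑_{K} ζ_K(z), where K ranges over all shuffles of the lists (a_N,...,a_1) and (b_M,...,b_1), i.e. all interleavings of the two lists preserving the relative order within each. -/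
/-- The coefficient function of the logarithmic polydifferential ζ_I:
for a list `[c_N, ..., c_1]` (head = leftmost entry),
`zeta [c_N,...,c_1] z = (∏_{k=2}^N 1/(c_k - c_{k-1})) · 1/(c_1 - z)`, `zeta [] z = 1`. -/
noncomputable def zeta : List ℂ → ℂ → ℂ
  | [], _ => 1
  | [a], z => (a - z)⁻¹
  | a :: b :: rest, z => (a - b)⁻¹ * zeta (b :: rest) z

/-- All shuffles (interleavings preserving relative order) of two lists. -/
def shuffles {α : Type*} : List α → List α → List (List α)
  | [], ys => [ys]
  | x :: xs, [] => [x :: xs]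
  | x :: xs, y :: ys =>
      (shuffles xs (y :: ys)).map (x :: ·) ++ (shuffles (x :: xs) ys).map (y :: ·)
  termination_by l₁ l₂ => l₁.length + l₂.length

lemma zeta_nil (z : ℂ) : zeta [] z = 1 := rfl

lemma zeta_concat (L : List ℂ) (c z : ℂ) : zeta (L ++ [c]) z = zeta L c * (c - z)⁻¹ := by
  induction L with
  | nil => simp [zeta]
  | cons d L ih =>
    cases L with
    | nil => simp [zeta]
    | cons e rest =>
      simp only [List.cons_append] at *
      rw [zeta, zeta, ih, mul_assoc]

lemma shuffles_nil_right {α : Type*} (l : List α) : shuffles l [] = [l] := by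
  cases l <;> simp [shuffles]

lemma sum_shuffles_concat {α M : Type*} [AddCommMonoid M] (f : List α → M) :
    ∀ (A B : List α) (a b : α),
    ((shuffles (A ++ [a]) (B ++ [b])).map f).sum
      = ((shuffles A (B ++ [b])).map (fun K => f (K ++ [a]))).sum
      + ((shuffles (A ++ [a]) B).map (fun K => f (K ++ [b]))).sum
  | [], [], a, b => by
      simp [shuffles]
      abel
  | [], y :: ys, a, b => by
      have ih := sum_shuffles_concat (f := fun K => f (y :: K)) [] ys a b
      simp only [List.nil_append, List.cons_append, shuffles, shuffles_nil_right,
        List.map_append, List.sum_append, List.map_map, Function.comp_def,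
        List.map_cons, List.map_nil, List.sum_cons, List.sum_nil] at *
      rw [ih]
      abel
  | x :: xs, [], a, b => by
      have ih := sum_shuffles_concat (f := fun K => f (x :: K)) xs [] a b
      simp only [List.nil_append, List.cons_append, shuffles, shuffles_nil_right,
        List.map_append, List.sum_append, List.map_map, Function.comp_def,
        List.map_cons, List.map_nil, List.sum_cons, List.sum_nil] at *
      rw [ih]
      abel
  | x :: xs, y :: ys, a, b => by
      have ih1 := sum_shuffles_concat (f := fun K => f (x :: K)) xs (y :: ys) a b
      have ih2 := sum_shuffles_concat (f := fun K => f (y :: K)) (x :: xs) ys a b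
      simp only [List.cons_append, shuffles, List.map_append, List.sum_append,
        List.map_map, Function.comp_def] at *
      rw [ih1, ih2]
      abel
  termination_by A B => A.length + B.length
  decreasing_by all_goals (simp [List.length_append]; try omega)

lemma main_zeta : ∀ (z : ℂ) (A B : List ℂ),
    (z :: (A ++ B)).Pairwise (· ≠ ·) →
    zeta A z * zeta B z = ((shuffles A B).map (fun K => zeta K z)).sum := by
  intro z A B h
  rcases A.eq_nil_or_concat with rfl | ⟨A', a, rfl⟩
  · simp [shuffles, zeta]
  rcases B.eq_nil_or_concat with rfl | ⟨B', b, rfl⟩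
  · simp [shuffles_nil_right, zeta]
  simp only [List.concat_eq_append] at h ⊢
  -- distinctness facts
  have hmem : ∀ x ∈ (A' ++ [a]) ++ (B' ++ [b]), z ≠ x := (List.pairwise_cons.1 h).1
  have hza : z ≠ a := hmem a (by simp)
  have hzb : z ≠ b := hmem b (by simp)
  have hAB : ((A' ++ [a]) ++ (B' ++ [b])).Pairwise (· ≠ ·) := (List.pairwise_cons.1 h).2
  have hab : a ≠ b := by
    have := (List.pairwise_append.1 hAB).2.2
    exact this a (by simp) b (by simp)
  have hA : (a :: (A' ++ (B' ++ [b]))).Pairwise (· ≠ ·) := by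
    refine hAB.perm ?_ (fun hxy => Ne.symm hxy)
    rw [List.append_assoc, List.singleton_append]
    exact List.perm_middle
  have hB : (b :: ((A' ++ [a]) ++ B')).Pairwise (· ≠ ·) := by
    refine hAB.perm ?_ (fun hxy => Ne.symm hxy)
    have e : (A' ++ [a]) ++ (B' ++ [b]) = ((A' ++ [a]) ++ B') ++ [b] := by
      simp [List.append_assoc]
    rw [e]
    exact List.perm_append_singleton _ _
  have ih1 := main_zeta a A' (B' ++ [b]) hA
  have ih2 := main_zeta b (A' ++ [a]) B' hB
  rw [sum_shuffles_concat]
  have e1 : ((shuffles A' (B' ++ [b])).map (fun K => zeta (K ++ [a]) z)).sum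
      = zeta A' a * zeta (B' ++ [b]) a * (a - z)⁻¹ := by
    rw [ih1]
    simp only [zeta_concat]
    rw [← List.sum_map_mul_right]
  have e2 : ((shuffles (A' ++ [a]) B').map (fun K => zeta (K ++ [b]) z)).sum
      = zeta (A' ++ [a]) b * zeta B' b * (b - z)⁻¹ := by
    rw [ih2]
    simp only [zeta_concat]
    rw [← List.sum_map_mul_right]
  rw [e1, e2, zeta_concat, zeta_concat, zeta_concat, zeta_concat]
  have h1 : a - z ≠ 0 := sub_ne_zero.2 (Ne.symm hza)
  have h2 : b - z ≠ 0 := sub_ne_zero.2 (Ne.symm hzb)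
  have h3 : a - b ≠ 0 := sub_ne_zero.2 hab
  have h4 : b - a ≠ 0 := sub_ne_zero.2 hab.symm
  field_simp
  ring
  termination_by z A B => A.length + B.length
  decreasing_by all_goals (subst_vars; simp only [List.concat_eq_append, List.length_append,
    List.length_cons, List.length_nil]; omega)

/-- Shuffle product identity: if `z` and the entries of `A` and `B` are pairwise
distinct, then `ζ_A(z) · ζ_B(z) = ∑_{K shuffle of A,B} ζ_K(z)`. -/
theorem zeta_shuffle_product (z : ℂ) (A B : List ℂ)
    (h : (z :: (A ++ B)).Pairwise (· ≠ ·)) :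
    zeta A z * zeta B z = ((shuffles A B).map (fun K => zeta K z)).sum :=
  main_zeta z A B h
end

section
/- Let z, w and t_{i_1}, ..., t_{i_N} be pairwise distinct complex numbers. For a list I = (i_N, ..., i_1) set ζ_I(z) = (∏_{k=2}^{N} 1/(t_{i_k} - t_{i_{k-1}})) · 1/(t_{i_1} - z) and ζ_∅(z) = 1, and for a list J let J* denote J in reverse order. Then ((z - w)/(t_{i_N} - w)) · ζ_I(z) = ∑_{I = I_2 I_1} (-1)^{|I_2|} ζ_{I_1}(z) · ζ_{I_2*}(w), where the sum is over all decompositions of I as a concatenation of an initial segment I_2 and a final segment I_1 (including the empty ones). -/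
/-!
Write `S(L; z, w) = ∑ₖ (-1)ᵏ ζ_{drop k L}(z) ζ_{(take k L)*}(w)`. Peeling the first entry `a`
off every nonempty initial segment, and using `ζ_{J ++ [a]}(w) = ζ_J(a) / (a - w)`, gives the
recursion `S(a :: L; z, w) = ζ_{a :: L}(z) - S(L; z, a) / (a - w)`, valid without any hypothesis.
Induction on the length of `I` then reduces the identity to the partial fractions
`1/(a - z) - 1/(a - w) = (z - w)/((a - z)(a - w))` and `1 + (z - a)/(a - w) = (z - w)/(a - w)`.
-/

open Finset

noncomputable def shuffleSum (L : List ℂ) (z w : ℂ) : ℂ :=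
  ∑ k ∈ range (L.length + 1), (-1 : ℂ) ^ k * zeta (L.drop k) z * zeta (L.take k).reverse w

lemma zeta_cons_cons (a b : ℂ) (L : List ℂ) (z : ℂ) :
    zeta (a :: b :: L) z = (a - b)⁻¹ * zeta (b :: L) z := rfl

lemma zeta_append_singleton (L : List ℂ) (a w : ℂ) :
    zeta (L ++ [a]) w = zeta L a * (a - w)⁻¹ := by
  induction L with
  | nil => simp [zeta]
  | cons x L ih =>
    cases L with
    | nil => simp [zeta]
    | cons y L =>
      rw [List.cons_append, List.cons_append, zeta_cons_cons, ← List.cons_append, ih,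
        zeta_cons_cons, mul_assoc]

@[simp]
lemma shuffleSum_nil (z w : ℂ) : shuffleSum [] z w = 1 := by
  simp [shuffleSum, zeta]

lemma shuffleSum_cons (a : ℂ) (L : List ℂ) (z w : ℂ) :
    shuffleSum (a :: L) z w = zeta (a :: L) z - (a - w)⁻¹ * shuffleSum L z a := by
  have hterm (k : ℕ) :
      (-1 : ℂ) ^ (k + 1) * zeta ((a :: L).drop (k + 1)) z *
          zeta ((a :: L).take (k + 1)).reverse w =
        -(a - w)⁻¹ * ((-1 : ℂ) ^ k * zeta (L.drop k) z * zeta (L.take k).reverse a) := by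
    rw [List.drop_succ_cons, List.take_succ_cons, List.reverse_cons, zeta_append_singleton,
      pow_succ]
    ring
  rw [shuffleSum, List.length_cons, sum_range_succ', sum_congr rfl fun k _ => hterm k,
    ← mul_sum, shuffleSum]
  simp [zeta, sub_eq_neg_add]

lemma shuffleSum_eq_of_isChain (z w a : ℂ) (t : List ℂ)
    (hchain : (w :: a :: t).IsChain (· ≠ ·)) (hz : z ≠ (a :: t).getLast (List.cons_ne_nil a t)) :
    shuffleSum (a :: t) z w = (z - w) / (a - w) * zeta (a :: t) z := by
  induction t generalizing a w with
  | nil =>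
    have haw : a - w ≠ 0 := sub_ne_zero.mpr (List.isChain_pair.mp hchain).symm
    have haz : a - z ≠ 0 := sub_ne_zero.mpr (Ne.symm hz)
    simp only [shuffleSum_cons, shuffleSum_nil, zeta]
    field_simp
    ring
  | cons b t ih =>
    obtain ⟨hwa, hab, -⟩ : w ≠ a ∧ a ≠ b ∧ _ := by simpa using hchain
    have haw : a - w ≠ 0 := sub_ne_zero.mpr hwa.symm
    have hba : b - a ≠ 0 := sub_ne_zero.mpr hab.symm
    have hab' : a - b ≠ 0 := sub_ne_zero.mpr hab
    rw [shuffleSum_cons, ih a b hchain.tail (by simpa using hz), zeta_cons_cons]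
    field_simp
    ring

/-- Mixed shuffle identity: for pairwise distinct `z, w` and entries of the nonempty
list `I = (t_{i_N},...,t_{i_1})` (head = leftmost = `t_{i_N}`),
`((z-w)/(t_{i_N}-w)) ζ_I(z) = ∑_{I = I₂I₁} (-1)^{|I₂|} ζ_{I₁}(z) ζ_{I₂*}(w)`,
summing over all splittings of `I` into an initial segment `I₂` and final segment `I₁`. -/
theorem mixed_shuffle (z w : ℂ) (I : List ℂ) (hI : I ≠ [])
    (h : (z :: w :: I).Pairwise (· ≠ ·)) :
    ((z - w) / (I.head hI - w)) * zeta I z =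
      ∑ k ∈ Finset.range (I.length + 1),
        (-1 : ℂ) ^ k * zeta (I.drop k) z * zeta (I.take k).reverse w := by
  obtain _ | ⟨a, t⟩ := I
  · exact absurd rfl hI
  have hchain : (w :: a :: t).IsChain (· ≠ ·) := (List.pairwise_cons.mp h).2.isChain
  have hz : z ≠ (a :: t).getLast (List.cons_ne_nil a t) :=
    (List.pairwise_cons.mp h).1 _ (List.mem_cons_of_mem w (List.getLast_mem _))
  exact (shuffleSum_eq_of_isChain z w a t hchain hz).symm
end

section
/- Let z, w and points t_i (i in a finite index set) be pairwise distinct complex numbers. Let I = I'' i I' and J = J'' j J' be two disjoint lists of indices, with distinguished entries i and j respectively. With ζ and ω defined as usual (ζ_{(c_N,...,c_1)}(u) = ∏_{k=2}^N 1/(t_{c_k}-t_{c_{k-1}}) · 1/(t_{c_1}-u), ω_{(c_N,...,c_1)} = ∏_{k=2}^N 1/(t_{c_k}-t_{c_{k-1}})), we have: ((z-w)/(t_i - t_j)) ζ_I(z) ζ_J(w) = ζ_I(z) ζ_J(w) − ∑_{I'=I_2 I_1} (-1)^{|I_2|} ζ_{I_1}(z) · ω_{I_2* i} · ω_{I'' i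 j} · ζ_J(w) − ∑_{J'=J_2 J_1} (-1)^{|J_2|} ω_{J_2* j} · ω_{J'' j i} · ζ_I(z) · ζ_{J_1}(w). -/
/-- `omega [c_N,...,c_1] = ∏_{k=2}^N 1/(c_k - c_{k-1})`, singleton ↦ 1, `omega [] = 0`. -/
noncomputable def omega : List ℂ → ℂ
  | [] => 0
  | [_] => 1
  | a :: b :: rest => (a - b)⁻¹ * omega (b :: rest)

lemma omega_concat (L : List ℂ) (a b : ℂ) :
    omega (L ++ [a, b]) = omega (L ++ [a]) * (a - b)⁻¹ := by
  induction L with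
  | nil => simp [omega]
  | cons x L ih =>
    cases L with
    | nil => simp [omega]
    | cons y L' =>
      simp only [List.cons_append, List.append_eq, omega] at *
      rw [ih]; ring

lemma zeta_append (L M : List ℂ) (a z : ℂ) :
    zeta (L ++ a :: M) z = omega (L ++ [a]) * zeta (a :: M) z := by
  induction L with
  | nil => simp [omega]
  | cons x L ih =>
    cases L with
    | nil => simp [omega, zeta]
    | cons y L' =>
      simp only [List.cons_append, List.append_eq, omega, zeta] at *
      rw [ih]; ring

lemma sumA (t z : ℂ) (L : List ℂ) (h : (z :: t :: L).Pairwise (· ≠ ·)) :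
    ∑ k ∈ Finset.range (L.length + 1),
      (-1 : ℂ) ^ k * zeta (L.drop k) z * omega ((L.take k).reverse ++ [t]) =
    (t - z) * zeta (t :: L) z := by
  induction L generalizing t with
  | nil =>
    have htz : t ≠ z := by
      have := (List.pairwise_cons.mp h).1 t (by simp)
      exact fun e => this (e ▸ rfl)
    have h1 : t - z ≠ 0 := sub_ne_zero.mpr htz
    simp [zeta, omega, h1]
  | cons a rest ih =>
    have h' : (z :: a :: rest).Pairwise (· ≠ ·) := by
      refine List.Pairwise.sublist ?_ h
      exact List.Sublist.cons₂ z (List.Sublist.cons t (List.Sublist.refl _))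
    have hta : t ≠ a := by
      have := (List.pairwise_cons.mp (List.pairwise_cons.mp h).2).1 a (by simp)
      exact this
    have h1 : a - t ≠ 0 := sub_ne_zero.mpr (Ne.symm hta)
    have h2 : t - a ≠ 0 := sub_ne_zero.mpr hta
    rw [Finset.sum_range_succ']
    have hterm : ∀ i ∈ Finset.range (rest.length + 1),
        (-1 : ℂ) ^ (i + 1) * zeta ((a :: rest).drop (i + 1)) z *
          omega (((a :: rest).take (i + 1)).reverse ++ [t]) =
        (-(a - t)⁻¹) *
          ((-1 : ℂ) ^ i * zeta (rest.drop i) z * omega ((rest.take i).reverse ++ [a])) := by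
      intro i _
      have h3 : ((a :: rest).take (i + 1)).reverse ++ [t] =
          (rest.take i).reverse ++ [a, t] := by
        simp [List.take_cons, List.append_assoc]
      rw [h3, omega_concat, List.drop_succ_cons, pow_succ]
      ring
    simp only [List.length_cons]
    rw [Finset.sum_congr rfl hterm, ← Finset.mul_sum, ih a h']
    simp only [List.drop_zero, List.take_zero, List.reverse_nil, List.nil_append, pow_zero,
      one_mul]
    have hz : omega [t] = 1 := rfl
    have hzz : zeta (t :: a :: rest) z = (t - a)⁻¹ * zeta (a :: rest) z := rfl
    rw [hz, hzz]
    field_simp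
    ring

/-- Two-parameter identity: with `I = I'' i I'`, `J = J'' j J'` (head = leftmost),
all of `z, w` and the entries of `I` and `J` pairwise distinct,
`((z-w)/(t_i - t_j)) ζ_I(z) ζ_J(w) = ζ_I(z) ζ_J(w)
  − ∑_{I'=I₂I₁} (-1)^{|I₂|} ζ_{I₁}(z) ω_{I₂* i} ω_{I'' i j} ζ_J(w)
  − ∑_{J'=J₂J₁} (-1)^{|J₂|} ω_{J₂* j} ω_{J'' j i} ζ_I(z) ζ_{J₁}(w)`. -/
theorem mixed_shuffle₃ (z w ti tj : ℂ) (I'' I' J'' J' : List ℂ)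
    (h : (z :: w :: ((I'' ++ ti :: I') ++ (J'' ++ tj :: J'))).Pairwise (· ≠ ·)) :
    ((z - w) / (ti - tj)) * zeta (I'' ++ ti :: I') z * zeta (J'' ++ tj :: J') w =
      zeta (I'' ++ ti :: I') z * zeta (J'' ++ tj :: J') w -
        (∑ k ∈ Finset.range (I'.length + 1),
          (-1 : ℂ) ^ k * zeta (I'.drop k) z * omega ((I'.take k).reverse ++ [ti]) *
            omega (I'' ++ [ti, tj]) * zeta (J'' ++ tj :: J') w) -
        (∑ k ∈ Finset.range (J'.length + 1),
          (-1 : ℂ) ^ k * omega ((J'.take k).reverse ++ [tj]) * omega (J'' ++ [tj, ti]) *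
            zeta (I'' ++ ti :: I') z * zeta (J'.drop k) w) := by
  have h2 : ((I'' ++ ti :: I') ++ (J'' ++ tj :: J')).Pairwise (· ≠ ·) :=
    ((List.pairwise_cons.mp (List.pairwise_cons.mp h).2).2)
  have hpI : (z :: ti :: I').Pairwise (· ≠ ·) := by
    refine List.Pairwise.sublist ?_ h
    refine List.Sublist.cons₂ z (List.Sublist.cons w ?_)
    exact ((List.sublist_append_right I'' (ti :: I')).trans
      (List.sublist_append_left _ _))
  have hpJ : (w :: tj :: J').Pairwise (· ≠ ·) := by
    refine List.Pairwise.sublist ?_ h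
    refine List.Sublist.cons z (List.Sublist.cons₂ w ?_)
    exact ((List.sublist_append_right J'' (tj :: J')).trans
      (List.sublist_append_right _ _))
  have hij : ti ≠ tj := by
    have := (List.pairwise_append.mp h2).2.2 ti (by simp) tj (by simp)
    exact this
  have d1 : ti - tj ≠ 0 := sub_ne_zero.mpr hij
  have d2 : tj - ti ≠ 0 := sub_ne_zero.mpr (Ne.symm hij)
  have hI : (∑ k ∈ Finset.range (I'.length + 1),
        (-1 : ℂ) ^ k * zeta (I'.drop k) z * omega ((I'.take k).reverse ++ [ti]) *
          omega (I'' ++ [ti, tj]) * zeta (J'' ++ tj :: J') w) =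
      omega (I'' ++ [ti, tj]) * zeta (J'' ++ tj :: J') w *
        ((ti - z) * zeta (ti :: I') z) := by
    rw [← sumA ti z I' hpI, Finset.mul_sum]
    exact Finset.sum_congr rfl (fun k _ => by ring)
  have hJ : (∑ k ∈ Finset.range (J'.length + 1),
        (-1 : ℂ) ^ k * omega ((J'.take k).reverse ++ [tj]) * omega (J'' ++ [tj, ti]) *
          zeta (I'' ++ ti :: I') z * zeta (J'.drop k) w) =
      omega (J'' ++ [tj, ti]) * zeta (I'' ++ ti :: I') z *
        ((tj - w) * zeta (tj :: J') w) := by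
    rw [← sumA tj w J' hpJ, Finset.mul_sum]
    exact Finset.sum_congr rfl (fun k _ => by ring)
  rw [hI, hJ, zeta_append I'' I' ti z, zeta_append J'' J' tj w,
    omega_concat I'' ti tj, omega_concat J'' tj ti]
  field_simp
  ring
end

section
/- Let m ≥ 0 be an integer and let N = m + 1. Let t_1, ..., t_N be pairwise distinct complex numbers and z any complex number. Then ∑_{σ ∈ S_N} ∏_{k=1}^{N} ( m − 2 ∑_{l < k} (t_{σ(k)} - z)/(t_{σ(k)} - t_{σ(l)}) ) = 0. -/
/-!
Group the permutations `σ` of `Fin (n + 1)` by `i = σ (last n)`. The last factor of the product is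
then `b + a ∑_{j ≠ i} x i j`, independent of how the other `n` labels are ordered, while the remaining
factors form the same sum for those `n` labels; so the sum factors by induction. Summing the last
factor over `i` uses only `x i j + x j i = 1`: pairing `(i, j)` with `(j, i)` gives
`∑_i ∑_{j ≠ i} x i j = (n + 1).choose 2`. For `x i j = (t i - z) / (t i - t j)` the pairing holds,
and with `b = m`, `a = -2`, `n + 1 = m + 1` the top factor `(m + 1) m - 2 (m + 1).choose 2` vanishes.
-/

open Finset Equiv

variable {R ι κ : Type*} [CommRing R] {n : ℕ}

def prefixProd (x : ι → ι → R) (b a : R) (f : Fin n → ι) : R :=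
  ∏ k, (b + a * ∑ l < k, x (f k) (f l))

lemma prefixProd_comp (x : ι → ι → R) (b a : R) (g : κ → ι) (f : Fin n → κ) :
    prefixProd x b a (g ∘ f) = prefixProd (fun p q ↦ x (g p) (g q)) b a f :=
  rfl

lemma prefixProd_succ (x : ι → ι → R) (b a : R) (f : Fin (n + 1) → ι) :
    prefixProd x b a f = prefixProd x b a (f ∘ Fin.castSucc) *
      (b + a * ∑ l : Fin n, x (f (Fin.last n)) (f l.castSucc)) := by
  simp only [prefixProd, Fin.prod_univ_castSucc, Fin.sum_Iio_castSucc, Fin.Iio_last_eq_map,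
    sum_map, Fin.coe_castSuccEmb, Function.comp_apply]

lemma sum_sum_erase_eq_choose_two (x : Fin n → Fin n → R)
    (hx : ∀ i j, i ≠ j → x i j + x j i = 1) :
    ∑ i, ∑ j ∈ univ.erase i, x i j = n.choose 2 := by
  have split (i : Fin n) : ∑ j ∈ univ.erase i, x i j = ∑ j < i, x i j + ∑ j > i, x i j := by
    rw [← sum_union (disjoint_Ioi_Iio i).symm]
    exact sum_congr (by ext j; simp) fun _ _ ↦ rfl
  have upper_eq_lower : ∑ i, ∑ j > i, x i j = ∑ i, ∑ j < i, x j i := sum_comm' (by simp)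
  calc ∑ i, ∑ j ∈ univ.erase i, x i j = ∑ i, ∑ j < i, (x i j + x j i) := by
        simp only [split, sum_add_distrib, upper_eq_lower]
    _ = ∑ i : Fin n, (i : R) := by
        refine sum_congr rfl fun i _ ↦ ?_
        rw [sum_congr rfl fun j hj ↦ hx i j (mem_Iio.mp hj).ne', sum_const, Fin.card_Iio,
          nsmul_one]
    _ = n.choose 2 := by
        rw [Fin.sum_univ_eq_sum_range (fun i ↦ (i : R)), ← Nat.cast_sum, sum_range_id,
          Nat.choose_two_right]

lemma Fin.sum_swap_last_castSucc {M : Type*} [AddCommGroup M] (f : Fin (n + 1) → M)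
    (i : Fin (n + 1)) :
    ∑ k : Fin n, f (swap (Fin.last n) i k.castSucc) = ∑ j ∈ univ.erase i, f j := by
  have h := Equiv.sum_comp (swap (Fin.last n) i) f
  rw [Fin.sum_univ_castSucc, swap_apply_left, ← add_sum_erase _ _ (mem_univ i), add_comm] at h
  exact add_left_cancel h

namespace Equiv.Perm

def decomposeFinLast : Perm (Fin (n + 1)) ≃ Fin (n + 1) × Perm (Fin n) :=
  ((permCongr finSuccEquivLast).trans decomposeOption).trans
    (prodCongr finSuccEquivLast.symm (Equiv.refl _))

lemma decomposeFinLast_symm_apply_last (i : Fin (n + 1)) (e : Perm (Fin n)) :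
    decomposeFinLast.symm (i, e) (Fin.last n) = i := by
  simp [decomposeFinLast, permCongr_apply]

lemma decomposeFinLast_symm_apply_castSucc (i : Fin (n + 1)) (e : Perm (Fin n)) (k : Fin n) :
    decomposeFinLast.symm (i, e) k.castSucc = swap (Fin.last n) i (e k).castSucc := by
  simp [decomposeFinLast, permCongr_apply, finSuccEquivLast.symm.injective.map_swap]

end Equiv.Perm

open Equiv.Perm

lemma prefixProd_decomposeFinLast_symm (x : Fin (n + 1) → Fin (n + 1) → R) (b a : R)
    (i : Fin (n + 1)) (e : Perm (Fin n)) :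
    prefixProd x b a (decomposeFinLast.symm (i, e)) =
      prefixProd (fun p q ↦ x (swap (Fin.last n) i p.castSucc) (swap (Fin.last n) i q.castSucc))
        b a e * (b + a * ∑ j ∈ univ.erase i, x i j) := by
  have hcomp : decomposeFinLast.symm (i, e) ∘ Fin.castSucc =
      (fun k ↦ swap (Fin.last n) i k.castSucc) ∘ e :=
    funext (decomposeFinLast_symm_apply_castSucc i e)
  simp only [prefixProd_succ, hcomp, prefixProd_comp, decomposeFinLast_symm_apply_last,
    decomposeFinLast_symm_apply_castSucc]
  rw [Equiv.sum_comp e (fun k ↦ x i (swap (Fin.last n) i k.castSucc)),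
    Fin.sum_swap_last_castSucc]

-- `∏_{j=1}^{n} (j b + C(j, 2) a)` is `n! ∏_{j<n} (b + j a / 2)`, written without division.
theorem sum_perm_prefixProd (x : Fin n → Fin n → R) (hx : ∀ i j, i ≠ j → x i j + x j i = 1)
    (b a : R) :
    ∑ σ : Perm (Fin n), prefixProd x b a σ = ∏ j ∈ Icc 1 n, (j * b + j.choose 2 * a) := by
  induction n with
  | zero => simp [prefixProd]
  | succ n ih =>
    have fiber (i : Fin (n + 1)) : ∑ e, prefixProd x b a (decomposeFinLast.symm (i, e)) =
        (∏ j ∈ Icc 1 n, (j * b + j.choose 2 * a)) * (b + a * ∑ j ∈ univ.erase i, x i j) := by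
      simp only [prefixProd_decomposeFinLast_symm, ← sum_mul]
      rw [ih]
      intro p q hpq
      exact hx _ _ fun h ↦ hpq (Fin.castSucc_injective _ ((swap _ _).injective h))
    rw [← decomposeFinLast.symm.sum_comp, Fintype.sum_prod_type, sum_congr rfl fun i _ ↦ fiber i,
      ← mul_sum, sum_add_distrib, ← mul_sum, sum_sum_erase_eq_choose_two x hx,
      prod_Icc_succ_top (by omega), sum_const, card_univ, Fintype.card_fin, nsmul_eq_mul]
    push_cast
    ring

lemma sub_div_sub_add_sub_div_sub_eq_one {K : Type*} [Field K] {u v : K} (h : u ≠ v) (z : K) :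
    (u - z) / (u - v) + (v - z) / (v - u) = 1 := by
  rw [← neg_sub u v, div_neg, ← sub_eq_add_neg, ← sub_div, sub_sub_sub_cancel_right,
    div_self (sub_ne_zero.mpr h)]

/-- Specialization `b = m`, `a = -2`, `N = m+1` of the sum–product identity:
`∑_{σ∈S_{m+1}} ∏_{k} (m − 2 ∑_{l<k} (t_{σ(k)}-z)/(t_{σ(k)}-t_{σ(l)})) = 0`. -/
theorem sum_product_vanishing (m : ℕ) (t : Fin (m + 1) → ℂ)
    (ht : Function.Injective t) (z : ℂ) :
    ∑ σ : Equiv.Perm (Fin (m + 1)), ∏ k : Fin (m + 1),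
        ((m : ℂ) - 2 * ∑ l ∈ univ.filter (fun l => l < k),
          (t (σ k) - z) / (t (σ k) - t (σ l))) = 0 := by
  have hx (i j : Fin (m + 1)) (hij : i ≠ j) :
      (t i - z) / (t i - t j) + (t j - z) / (t j - t i) = 1 :=
    sub_div_sub_add_sub_div_sub_eq_one (ht.ne hij) z
  have top_factor : ((m + 1 : ℕ) : ℂ) * m + ((m + 1).choose 2 : ℕ) * -2 = 0 := by
    rw [Nat.cast_choose_two]
    push_cast
    ring
  have h := sum_perm_prefixProd _ hx (m : ℂ) (-2)
  simp only [prefixProd, neg_mul, ← sub_eq_add_neg, filter_gt_eq_Iio] at h ⊢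
  rw [h, prod_eq_zero (right_mem_Icc.mpr (Nat.le_add_left 1 m)) top_factor]
end

section
/- Let z, x and t_{i_1}, ..., t_{i_N} be pairwise distinct complex numbers, let p be a complex number, and let c_1, ..., c_N be complex numbers (c_k attached to the index i_k). Define for a list L = (c'_M, ..., c'_1) of distinct points ζ_L(z) = ∏_{k=2}^{M} 1/(c'_k - c'_{k-1}) · 1/(c'_1 - z). Then ( p/(x − z) − ∑_{k=1}^{N} c_k/(x − t_{i_k}) ) · ζ_{(t_{i_N},...,t_{i_1})}(z) = ∑_{j=0}^{N} ( p − ∑_{k=1}^{j} c_k ) · ζ_{(t_{i_N},...,t_{i_{j+1}}, x, t_{i_j},...,t_{i_1})}(z), where in the j-th summand the point x is inserted into the list between positions j and j+1 (counted from the right), so that for the decomposition into (t_{i_N},...,t_{i_{j+1}}) and (t_{i_j},...,t_{i_1}) the coefficient is p − ∑_{k ≤ j} c_k. -/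
open Finset

lemma zeta_cons (a : ℂ) (L : List ℂ) (z : ℂ) :
    zeta (a :: L) z = (a - L.headD z)⁻¹ * zeta L z := by
  cases L <;> simp [zeta]

lemma key (D q c Z A X W : ℂ) (h1 : X - A ≠ 0) (h0 : A - X ≠ 0) (h2 : X - W ≠ 0) (h3 : A - W ≠ 0) :
    (D - c / (X - A)) * ((A - W)⁻¹ * Z) =
      (A - W)⁻¹ * (D * Z - q * ((X - W)⁻¹ * Z)) + q * ((A - X)⁻¹ * ((X - W)⁻¹ * Z))
        + (q - c) * ((X - A)⁻¹ * ((A - W)⁻¹ * Z)) := by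
  field_simp
  ring

/-- Action of the operator `Φ_x` on `ζ_I`: with `T = (t_{i_N},...,t_{i_1})`
(head = leftmost) and coefficients `C` aligned with `T` (so the sum of the `j`
rightmost coefficients is `(C.drop (T.length - j)).sum`, i.e. `(C.drop k).sum`
for the split after `k` entries from the left),
`(p/(x−z) − ∑_k c_k/(x−t_{i_k})) ζ_T(z)
  = ∑_{k=0}^{N} (p − ∑ of coefficients of the tail) ζ_{T.take k ++ x :: T.drop k}(z)`. -/
theorem Phi_action (z x p : ℂ) (T C : List ℂ) (hlen : C.length = T.length)
    (h : (z :: x :: T).Pairwise (· ≠ ·)) :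
    (p / (x - z) - ((T.zip C).map fun tc => tc.2 / (x - tc.1)).sum) * zeta T z =
      ∑ k ∈ range (T.length + 1),
        (p - (C.drop k).sum) * zeta (T.take k ++ x :: T.drop k) z := by
  induction T generalizing C with
  | nil =>
    have hC : C = [] := by simpa using hlen
    subst hC
    simp [zeta, div_eq_mul_inv]
  | cons a T' ih =>
    cases C with
    | nil => simp at hlen
    | cons c C' =>
      simp only [List.length_cons, add_left_inj] at hlen
      simp only [List.pairwise_cons] at h
      obtain ⟨h1, h2, h3, h4⟩ := h
      have hpw : (z :: x :: T').Pairwise (· ≠ ·) := by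
        simp only [List.pairwise_cons]
        exact ⟨fun b hb => h1 b (by simp only [List.mem_cons] at hb ⊢; tauto),
          fun b hb => h2 b (List.mem_cons_of_mem a hb), h4⟩
      have hxa : x ≠ a := h2 a List.mem_cons_self
      have hxz : x ≠ z := (h1 x (by simp)).symm
      have hxh : x ≠ T'.headD z := by
        cases T' with
        | nil => simpa using hxz
        | cons b rest => simpa using h2 b (by simp)
      have hah : a ≠ T'.headD z := by
        cases T' with
        | nil => simpa using (h1 a (by simp)).symm
        | cons b rest => simpa using h3 b (by simp)
      have ihe := ih C' hlen hpw
      rw [Finset.sum_range_succ'] at ihe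
      simp only [List.take_zero, List.drop_zero, List.nil_append] at ihe
      rw [zeta_cons x T'] at ihe
      -- goal manipulation
      simp only [List.zip_cons_cons, List.map_cons, List.sum_cons, List.length_cons]
      rw [Finset.sum_range_succ']
      simp only [List.take_succ_cons, List.drop_succ_cons, List.take_zero, List.drop_zero,
        List.nil_append, List.drop, List.sum_cons]
      rw [Finset.sum_range_succ']
      simp only [List.take_succ_cons, List.drop_succ_cons, List.take_zero, List.drop_zero,
        List.nil_append, List.cons_append, List.singleton_append]
      have hstep : ∀ k ∈ range T'.length,
          (p - (C'.drop (k+1)).sum) * zeta (a :: (T'.take (k+1) ++ x :: T'.drop (k+1))) z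
          = (a - T'.headD z)⁻¹ *
            ((p - (C'.drop (k+1)).sum) * zeta (T'.take (k+1) ++ x :: T'.drop (k+1)) z) := by
        intro k hk
        rw [zeta_cons]
        cases T' with
        | nil => exact absurd hk (by simp)
        | cons b rest => simp only [List.take_succ_cons, List.cons_append, List.headD_cons]; ring
      rw [Finset.sum_congr rfl hstep, ← Finset.mul_sum]
      rw [zeta_cons a T', zeta_cons x (a :: T'), zeta_cons a (x :: T'), zeta_cons a T',
        zeta_cons x T']
      simp only [List.headD_cons]
      have hA : (∑ k ∈ range T'.length,
          (p - (C'.drop (k+1)).sum) * zeta (T'.take (k+1) ++ x :: T'.drop (k+1)) z)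
          = (p / (x - z) - ((T'.zip C').map fun tc => tc.2 / (x - tc.1)).sum) * zeta T' z
            - (p - C'.sum) * ((x - T'.headD z)⁻¹ * zeta T' z) := by
        linear_combination -ihe
      rw [hA]
      set w := T'.headD z with hw
      set Z := zeta T' z with hZ
      set S := (List.map (fun tc => tc.2 / (x - tc.1)) (T'.zip C')).sum with hS
      have e1 : x - a ≠ 0 := sub_ne_zero.mpr hxa
      have e2 : a - x ≠ 0 := sub_ne_zero.mpr (Ne.symm hxa)
      have e3 : x - w ≠ 0 := sub_ne_zero.mpr hxh
      have e4 : a - w ≠ 0 := sub_ne_zero.mpr hah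
      have e5 : x - z ≠ 0 := sub_ne_zero.mpr hxz
      linear_combination key (p / (x - z) - S) (p - C'.sum) c Z a x w e1 e2 e3 e4
end

section
/- Let a, b, c, d be complex numbers with ad − bc = 1 and let σ(u) = (au + b)/(cu + d). Let z, t_1, ..., t_N be pairwise distinct complex numbers such that cu + d ≠ 0 for u ∈ {z, t_1, ..., t_N}. Define ζ(c_N,...,c_1; z) = ∏_{k=2}^{N} 1/(c_k − c_{k−1}) · 1/(c_1 − z). Then ζ(σ(t_N), ..., σ(t_1); σ(z)) · ∏_{k=1}^{N} 1/(ct_k + d)² = ((cz + d)/(ct_N + d)) · ζ(t_N, ..., t_1; z). -/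
/-! Each factor `(f u - f v)⁻¹` of `zeta` picks up `j u * j v`; along the chain
`t_N, ..., t_1, z` every inner point occurs twice, so the weights telescope to
`j z * j t_N * ∏_{k<N} j t_k ^ 2`. For a Möbius map of determinant 1 the weight is
`j u = c u + d`. -/

theorem zeta_map_mul_prod {f j : ℂ → ℂ} {z t : ℂ} {T : List ℂ}
    (hf : ∀ u ∈ z :: t :: T, ∀ v ∈ z :: t :: T, f u - f v = (u - v) / (j u * j v))
    (hj : ∀ u ∈ t :: T, j u ≠ 0) :
    zeta ((t :: T).map f) (f z) * ((t :: T).map fun u => (j u ^ 2)⁻¹).prod =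
      j z / j t * zeta (t :: T) z := by
  induction T generalizing t with
  | nil =>
    simp only [List.map, zeta, List.prod_cons, List.prod_nil]
    rw [hf t (by simp) z (by simp)]
    have ht := hj t (by simp)
    field_simp
  | cons s T ih =>
    have hsub : z :: s :: T ⊆ z :: t :: s :: T :=
      List.cons_subset_cons z (List.subset_cons_self t _)
    have ih := ih (t := s) (fun u hu v hv => hf u (hsub hu) v (hsub hv))
      (fun u hu => hj u (List.mem_cons_of_mem t hu))
    simp only [List.map, zeta, List.prod_cons] at ih ⊢
    rw [hf t (by simp) s (by simp), mul_mul_mul_comm, ih]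
    have ht := hj t (by simp)
    have hs := hj s (by simp)
    field_simp

theorem moebius_sub_moebius {a b c d u v : ℂ} (hdet : a * d - b * c = 1)
    (hu : c * u + d ≠ 0) (hv : c * v + d ≠ 0) :
    (a * u + b) / (c * u + d) - (a * v + b) / (c * v + d) =
      (u - v) / ((c * u + d) * (c * v + d)) := by
  rw [div_sub_div _ _ hu hv]
  congr 1
  linear_combination (u - v) * hdet

theorem zeta_moebius_general (a b c d z : ℂ) (hdet : a * d - b * c = 1)
    (T : List ℂ) (hT : T ≠ [])
    (hden : ∀ u ∈ z :: T, c * u + d ≠ 0) :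
    zeta (T.map fun u => (a * u + b) / (c * u + d)) ((a * z + b) / (c * z + d)) *
        (T.map fun u => ((c * u + d) ^ 2)⁻¹).prod =
      ((c * z + d) / (c * T.head hT + d)) * zeta T z := by
  obtain ⟨t, T, rfl⟩ := List.exists_cons_of_ne_nil hT
  exact zeta_map_mul_prod (f := fun u => (a * u + b) / (c * u + d))
    (fun u hu v hv => moebius_sub_moebius hdet (hden u hu) (hden v hv))
    (fun u hu => hden u (List.mem_cons_of_mem z hu))

/-- Transformation law of `ζ_I` under a Möbius transformation `σ(u) = (au+b)/(cu+d)`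
of determinant 1: for pairwise distinct `z, t_N, ..., t_1` with all denominators
nonzero, `ζ(σ(t_N),...,σ(t_1); σ(z)) · ∏_k (ct_k+d)⁻² = ((cz+d)/(ct_N+d)) ζ(t_N,...,t_1; z)`.
(The list `T = [t_N,...,t_1]` has head `t_N`.) -/
theorem zeta_moebius (a b c d z : ℂ) (hdet : a * d - b * c = 1)
    (T : List ℂ) (hT : T ≠ []) (h : (z :: T).Pairwise (· ≠ ·))
    (hden : ∀ u ∈ z :: T, c * u + d ≠ 0) :
    zeta (T.map fun u => (a * u + b) / (c * u + d)) ((a * z + b) / (c * z + d)) *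
        (T.map fun u => ((c * u + d) ^ 2)⁻¹).prod =
      ((c * z + d) / (c * T.head hT + d)) * zeta T z :=
  zeta_moebius_general a b c d z hdet T hT hden
end
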